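/- arXiv:2509.01857 — 2 statements merged into one kernel-verified Lean document; each statement's English description precedes it below -/
import Mathlib

section
/- Let π ∈ S_{m,n} and (X,Y) ∈ E_π. Then: (i) XY is lower triangular and YX is upper triangular; (ii) (YX)_{jj} = (XY)_{ii} whenever j = π(i), and (YX)_{jj} = 0 for every j not in the image of π; (iii) for all 1 ≤ i ≤ m and 1 ≤ j ≤ n, the rank of the upper-left submatrix (X_{i'j'})_{i'≤i, j'≤j} is at most #{i' ≤ i : π(i') ≤ j}; (iv) for all 1 ≤ i ≤ m and 1 ≤ j ≤ n, the rank of the lower-right submatrix (Y_{j'i'})_{j' > n−j, i' > m−i} is at most #{i' > m−i : π(i') > n−j}. Moreover (ii'): if ρ ∈ S_{m,n} and ρ(i) ≠ j = π(i) for some i, then there exists a point (X,Y) ∈ E_ρ with (YX)_{jj} ≠ (XY)_{ii}. -/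
open Matrix

/-- The ambient space `Mat(m,n,ℂ) × Mat(n,m,ℂ)`. -/
abbrev LUSpace (m n : ℕ) := Matrix (Fin m) (Fin n) ℂ × Matrix (Fin n) (Fin m) ℂ

/-- Lower triangular square matrix. -/
def LowerTri {k : ℕ} (M : Matrix (Fin k) (Fin k) ℂ) : Prop := ∀ i j : Fin k, i < j → M i j = 0

/-- Upper triangular square matrix. -/
def UpperTri {k : ℕ} (M : Matrix (Fin k) (Fin k) ℂ) : Prop := ∀ i j : Fin k, j < i → M i j = 0

/-- The lower-upper scheme `E`. -/
def LU (m n : ℕ) : Set (LUSpace m n) :=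
  { p | LowerTri (p.1 * p.2) ∧ UpperTri (p.2 * p.1) }

/-- The partial permutation matrix associated to `π ∈ S_{m,n}`. -/
def permMat {m n : ℕ} (π : Fin m ↪ Fin n) : Matrix (Fin m) (Fin n) ℂ :=
  fun i j => if π i = j then 1 else 0

/-- Invertible lower triangular m×m matrices. -/
def Bminus (m : ℕ) : Set (Matrix (Fin m) (Fin m) ℂ) := { b | IsUnit b ∧ LowerTri b }

/-- Invertible upper triangular n×n matrices. -/
def Bplus (n : ℕ) : Set (Matrix (Fin n) (Fin n) ℂ) := { c | IsUnit c ∧ UpperTri c }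

/-- Lower unitriangular m×m matrices. -/
def Nminus (m : ℕ) : Set (Matrix (Fin m) (Fin m) ℂ) := { b | LowerTri b ∧ ∀ i, b i i = 1 }

/-- Upper unitriangular n×n matrices. -/
def Nplus (n : ℕ) : Set (Matrix (Fin n) (Fin n) ℂ) := { c | UpperTri c ∧ ∀ j, c j j = 1 }

/-- `E°_π`. -/
def Eopen {m n : ℕ} (π : Fin m ↪ Fin n) : Set (LUSpace m n) :=
  { p | ∃ b ∈ Nminus m, ∃ c ∈ Nplus n, ∃ s t : Fin m → ℂ,
      (∀ i, s i * t i ≠ 0) ∧ (∀ i i' : Fin m, i ≠ i' → s i * t i ≠ s i' * t i') ∧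
      p.1 = b * (Matrix.diagonal s * permMat π) * c⁻¹ ∧
      p.2 = c * ((permMat π)ᵀ * Matrix.diagonal t) * b⁻¹ }

/-- Coordinates of a point of `LUSpace` as a function on the variable-index type. -/
def coordsOf {m n : ℕ} (p : LUSpace m n) : (Fin m × Fin n) ⊕ (Fin n × Fin m) → ℂ
  | .inl ij => p.1 ij.1 ij.2
  | .inr ji => p.2 ji.1 ji.2

/-- Zariski closure of a subset of `LUSpace m n`: the common zero set of all polynomials
vanishing identically on the subset. -/
def zclosure {m n : ℕ} (S : Set (LUSpace m n)) : Set (LUSpace m n) :=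
  { p | ∀ f : MvPolynomial ((Fin m × Fin n) ⊕ (Fin n × Fin m)) ℂ,
      (∀ q ∈ S, MvPolynomial.eval (coordsOf q) f = 0) → MvPolynomial.eval (coordsOf p) f = 0 }

/-- `E_π`, the Zariski closure of `E°_π`. -/
def Ecomp {m n : ℕ} (π : Fin m ↪ Fin n) : Set (LUSpace m n) := zclosure (Eopen π)

/-- Zariski closure in the matrix space `Mat(m,n,ℂ)`. -/
def mzclosure {m n : ℕ} (S : Set (Matrix (Fin m) (Fin n) ℂ)) : Set (Matrix (Fin m) (Fin n) ℂ) :=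
  { X | ∀ f : MvPolynomial (Fin m × Fin n) ℂ,
      (∀ Y ∈ S, MvPolynomial.eval (fun ij => Y ij.1 ij.2) f = 0) →
        MvPolynomial.eval (fun ij => X ij.1 ij.2) f = 0 }


/-!
Each of (i)–(iv) is the vanishing of polynomials in the entries of `(X, Y)`: entries of `XY` and
`YX`, and, for a rank bound `rank ≤ r`, the `(r + 1)`-minors. Such conditions pass from `E°_π` to
its Zariski closure, so it suffices to check them at `X = b s π c⁻¹`, `Y = c πᵀ t b⁻¹`. There
`XY = b (st) b⁻¹` and `YX = c (πᵀ (st) π) c⁻¹` are conjugates of diagonal matrices by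
unitriangular matrices of the matching kind, which gives triangularity and the diagonals.
Corners of `X` and `Y` on the sides where `b` and `c` are triangular factor through the
corresponding corners of `b`, `c`, so their rank is at most that of the corner of `sπ`
resp. `πᵀt`, a partial permutation pattern. For (ii'): on `E°_ρ` the diagonal of `XY` consists of
distinct nonzero numbers, which `YX` carries along `ρ`, so no flux equation along `π i ≠ ρ i`
holds anywhere on `E°_ρ`.
-/

namespace Matrix

section Rank

variable {ι κ K : Type*} [Fintype ι] [Fintype κ] [Field K]

theorem rank_le_card_of_forall_notMem_row_eq_zero [DecidableEq ι] (A : Matrix ι κ K)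
    (S : Finset ι) (h : ∀ i ∉ S, A.row i = 0) : A.rank ≤ S.card := by
  classical
  set d : ι → K := fun i => if i ∈ S then 1 else 0
  have hA : diagonal d * A = A := by
    ext i j
    by_cases hi : i ∈ S
    · simp [d, hi]
    · simp [d, hi, show A i j = 0 from congrFun (h i hi) j]
  calc A.rank = (diagonal d * A).rank := by rw [hA]
    _ ≤ (diagonal d).rank := rank_mul_le_left _ _
    _ = S.card := by rw [rank_diagonal]; simp [d, Fintype.card_subtype]

theorem rank_le_card_of_forall_notMem_col_eq_zero [DecidableEq κ] (A : Matrix ι κ K)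
    (S : Finset κ) (h : ∀ j ∉ S, A.col j = 0) : A.rank ≤ S.card := by
  rw [← rank_transpose]
  exact Aᵀ.rank_le_card_of_forall_notMem_row_eq_zero S h

theorem exists_linearIndependent_row_comp_of_le_rank (A : Matrix ι κ K) {k : ℕ}
    (hk : k ≤ A.rank) : ∃ f : Fin k → ι, LinearIndependent K (A.row ∘ f) := by
  obtain ⟨s, a, ha, hspan, hli⟩ := exists_linearIndependent' K A.row
  have : Finite s := Finite.of_injective a ha
  have : Fintype s := Fintype.ofFinite s
  rw [rank_eq_finrank_span_row, ← hspan, finrank_span_eq_card hli] at hk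
  obtain ⟨e⟩ := Function.Embedding.nonempty_of_card_le
    (by simpa using hk : Fintype.card (Fin k) ≤ Fintype.card s)
  exact ⟨a ∘ e, hli.comp e e.injective⟩

theorem rank_le_iff_forall_det_submatrix_eq_zero [DecidableEq ι] [DecidableEq κ]
    (A : Matrix ι κ K) (r : ℕ) :
    A.rank ≤ r ↔ ∀ (f : Fin (r + 1) → ι) (g : Fin (r + 1) → κ), (A.submatrix f g).det = 0 := by
  constructor
  · intro hA f g
    by_contra hdet
    have := (rank_submatrix_le A f g).trans hA
    rw [rank_of_det_ne_zero hdet, Fintype.card_fin] at this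
    omega
  · intro h
    by_contra! hA
    obtain ⟨f, hf⟩ := A.exists_linearIndependent_row_comp_of_le_rank hA
    have hrows : (A.submatrix f id)ᵀ.rank = r + 1 := by
      rw [rank_transpose, hf.rank_matrix (M := A.submatrix f id), Fintype.card_fin]
    obtain ⟨g, hg⟩ := (A.submatrix f id)ᵀ.exists_linearIndependent_row_comp_of_le_rank hrows.ge
    have hunit : IsUnit (A.submatrix f g)ᵀ := linearIndependent_rows_iff_isUnit.mp hg
    rw [isUnit_transpose, isUnit_iff_isUnit_det, h f g] at hunit
    exact not_isUnit_zero hunit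

end Rank

theorem submatrix_mul_of_forall_notMem_range {α β γ l m n R : Type*} [Fintype m] [Fintype β]
    [NonUnitalNonAssocSemiring R] (A : Matrix l m R) (B : Matrix m n R) (r : α → l) (c : γ → n)
    {e : β → m} (he : Function.Injective e)
    (h : ∀ x y k, k ∉ Set.range e → A (r x) k * B k (c y) = 0) :
    (A * B).submatrix r c = A.submatrix r e * B.submatrix e c := by
  ext x y
  exact (Fintype.sum_of_injective e he _ _ (h x y) fun _ => rfl).symm

section Triangular

variable {ι α R : Type*} [Fintype ι] [LinearOrder α] {b : ι → α}

theorem BlockTriangular.mul_apply_self [NonUnitalNonAssocSemiring R]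
    (hb : Function.Injective b) {M N : Matrix ι ι R} (hM : M.BlockTriangular b)
    (hN : N.BlockTriangular b) (i : ι) :
    (M * N) i i = M i i * N i i := by
  rw [mul_apply]
  refine Finset.sum_eq_single i (fun k _ hk => ?_) (by simp)
  rcases lt_or_gt_of_ne (hb.ne hk) with h | h
  · rw [hM h, zero_mul]
  · rw [hN h, mul_zero]

theorem BlockTriangular.inv_of_diag_eq_one [DecidableEq ι] [CommRing R]
    (hb : Function.Injective b) {M : Matrix ι ι R} (hM : M.BlockTriangular b)
    (hd : ∀ i, M i i = 1) (hu : IsUnit M.det) :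
    M⁻¹.BlockTriangular b ∧ ∀ i, M⁻¹ i i = 1 := by
  have := M.invertibleOfIsUnitDet hu
  have hinv := blockTriangular_inv_of_blockTriangular hM
  refine ⟨hinv, fun i => ?_⟩
  have := congrFun (congrFun (M.mul_nonsing_inv hu) i) i
  rwa [hM.mul_apply_self hb hinv, hd, one_mul, one_apply_eq] at this

theorem BlockTriangular.mul_mul_apply_self_of_diag_eq_one [NonAssocSemiring R]
    (hb : Function.Injective b) {M D N : Matrix ι ι R} (hM : M.BlockTriangular b)
    (hD : D.BlockTriangular b) (hN : N.BlockTriangular b) (hMd : ∀ i, M i i = 1)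
    (hNd : ∀ i, N i i = 1) (i : ι) :
    (M * D * N) i i = D i i := by
  rw [(hM.mul hD).mul_apply_self hb hN, hM.mul_apply_self hb hD, hMd, hNd, one_mul, mul_one]

end Triangular

end Matrix

section Unitriangular

variable {m n : ℕ}

theorem LowerTri.isLowerTriangular {M : Matrix (Fin m) (Fin m) ℂ} (h : LowerTri M) :
    M.IsLowerTriangular :=
  fun _ _ hij => h _ _ hij

theorem UpperTri.isUpperTriangular {M : Matrix (Fin n) (Fin n) ℂ} (h : UpperTri M) :
    M.IsUpperTriangular :=
  fun _ _ hij => h _ _ hij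

theorem isUnit_det_of_mem_Nminus {b : Matrix (Fin m) (Fin m) ℂ} (hb : b ∈ Nminus m) :
    IsUnit b.det := by
  simp [Matrix.det_of_isLowerTriangular b hb.1.isLowerTriangular, hb.2]

theorem isUnit_det_of_mem_Nplus {c : Matrix (Fin n) (Fin n) ℂ} (hc : c ∈ Nplus n) :
    IsUnit c.det := by
  simp [Matrix.det_of_isUpperTriangular hc.1.isUpperTriangular, hc.2]

theorem inv_mem_Nminus {b : Matrix (Fin m) (Fin m) ℂ} (hb : b ∈ Nminus m) : b⁻¹ ∈ Nminus m :=
  Matrix.BlockTriangular.inv_of_diag_eq_one OrderDual.toDual.injective hb.1.isLowerTriangular hb.2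
    (isUnit_det_of_mem_Nminus hb)

theorem inv_mem_Nplus {c : Matrix (Fin n) (Fin n) ℂ} (hc : c ∈ Nplus n) : c⁻¹ ∈ Nplus n :=
  Matrix.BlockTriangular.inv_of_diag_eq_one Function.injective_id hc.1.isUpperTriangular hc.2
    (isUnit_det_of_mem_Nplus hc)

end Unitriangular

section PermMat

open Matrix

variable {m n : ℕ} (π : Fin m ↪ Fin n)

theorem permMat_apply (i : Fin m) (j : Fin n) : permMat π i j = if π i = j then 1 else 0 := rfl

theorem permMat_mul_transpose : permMat π * (permMat π)ᵀ = 1 := by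
  ext i i'
  simp [permMat_apply, mul_apply, one_apply, π.injective.eq_iff]

theorem permMat_transpose_mul_diagonal_mul (u : Fin m → ℂ) :
    (permMat π)ᵀ * diagonal u * permMat π = diagonal (Function.extend π u 0) := by
  ext j j'
  by_cases hj : ∃ i, π i = j
  · obtain ⟨i, rfl⟩ := hj
    simp [mul_apply, permMat_apply, diagonal_apply, π.injective.extend_apply, π.injective.eq_iff,
      Finset.sum_ite]
  · simp [mul_apply, permMat_apply, diagonal_apply, not_exists.mp hj]

end PermMat

namespace Fin

variable {n b : ℕ}

def natAddSub (hb : b ≤ n) (y : Fin b) : Fin n := ⟨n - b + y, by omega⟩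

theorem natAddSub_injective (hb : b ≤ n) : Function.Injective (natAddSub hb) :=
  fun y y' h => Fin.ext (by simpa [natAddSub] using h)

theorem lt_of_notMem_range_natAddSub (hb : b ≤ n) {k : Fin n}
    (hk : k ∉ Set.range (natAddSub hb)) : (k : ℕ) < n - b := by
  by_contra! h
  exact hk ⟨⟨k - (n - b), by omega⟩, Fin.ext (by simp [natAddSub]; omega)⟩

end Fin

section Corners

open Matrix

variable {m n a b : ℕ} {ι κ : Type*}

theorem LowerTri.submatrix_castLE_mul {L : Matrix (Fin m) (Fin m) ℂ} (hL : LowerTri L)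
    (A : Matrix (Fin m) κ ℂ) (ha : a ≤ m) (c : ι → κ) :
    (L * A).submatrix (Fin.castLE ha) c =
      L.submatrix (Fin.castLE ha) (Fin.castLE ha) * A.submatrix (Fin.castLE ha) c := by
  refine submatrix_mul_of_forall_notMem_range _ _ _ _ (Fin.castLE_injective ha) fun x _ k hk => ?_
  have : a ≤ (k : ℕ) := by simpa [Fin.range_castLE] using hk
  rw [hL _ _ (Fin.lt_def.mpr (x.2.trans_le this)), zero_mul]

theorem UpperTri.mul_submatrix_castLE {U : Matrix (Fin n) (Fin n) ℂ} (hU : UpperTri U)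
    (A : Matrix ι (Fin n) ℂ) (r : κ → ι) (hb : b ≤ n) :
    (A * U).submatrix r (Fin.castLE hb) =
      A.submatrix r (Fin.castLE hb) * U.submatrix (Fin.castLE hb) (Fin.castLE hb) := by
  refine submatrix_mul_of_forall_notMem_range _ _ _ _ (Fin.castLE_injective hb) fun _ y k hk => ?_
  have : b ≤ (k : ℕ) := by simpa [Fin.range_castLE] using hk
  rw [hU _ _ (Fin.lt_def.mpr (y.2.trans_le this)), mul_zero]

theorem UpperTri.submatrix_natAddSub_mul {U : Matrix (Fin n) (Fin n) ℂ} (hU : UpperTri U)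
    (A : Matrix (Fin n) κ ℂ) (hb : b ≤ n) (c : ι → κ) :
    (U * A).submatrix (Fin.natAddSub hb) c =
      U.submatrix (Fin.natAddSub hb) (Fin.natAddSub hb) * A.submatrix (Fin.natAddSub hb) c := by
  refine submatrix_mul_of_forall_notMem_range _ _ _ _ (Fin.natAddSub_injective hb)
    fun y _ k hk => ?_
  have := Fin.lt_of_notMem_range_natAddSub hb hk
  rw [hU _ _ (Fin.lt_def.mpr (by simp [Fin.natAddSub]; omega)), zero_mul]

theorem LowerTri.mul_submatrix_natAddSub {L : Matrix (Fin m) (Fin m) ℂ} (hL : LowerTri L)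
    (A : Matrix ι (Fin m) ℂ) (r : κ → ι) (ha : a ≤ m) :
    (A * L).submatrix r (Fin.natAddSub ha) =
      A.submatrix r (Fin.natAddSub ha) * L.submatrix (Fin.natAddSub ha) (Fin.natAddSub ha) := by
  refine submatrix_mul_of_forall_notMem_range _ _ _ _ (Fin.natAddSub_injective ha)
    fun _ x k hk => ?_
  have := Fin.lt_of_notMem_range_natAddSub ha hk
  rw [hL _ _ (Fin.lt_def.mpr (by simp [Fin.natAddSub]; omega)), mul_zero]

end Corners

section ZariskiClosed

open Matrix

variable {m n : ℕ}

def IsZariskiClosed (Z : Set (LUSpace m n)) : Prop :=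
  ∃ F : Set (MvPolynomial ((Fin m × Fin n) ⊕ (Fin n × Fin m)) ℂ),
    Z = {p | ∀ f ∈ F, MvPolynomial.eval (coordsOf p) f = 0}

theorem subset_zclosure (S : Set (LUSpace m n)) : S ⊆ zclosure S :=
  fun q hq _ hf => hf q hq

theorem IsZariskiClosed.zclosure_subset {S Z : Set (LUSpace m n)} (hZ : IsZariskiClosed Z)
    (hSZ : S ⊆ Z) : zclosure S ⊆ Z := by
  obtain ⟨F, rfl⟩ := hZ
  exact fun p hp f hf => hp f fun q hq => hSZ hq f hf

theorem isZariskiClosed_setOf_eval_eq_zero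
    (f : MvPolynomial ((Fin m × Fin n) ⊕ (Fin n × Fin m)) ℂ) :
    IsZariskiClosed {p : LUSpace m n | MvPolynomial.eval (coordsOf p) f = 0} :=
  ⟨{f}, by simp⟩

def IsPolynomialMatrix {α β : Type*} (M : LUSpace m n → Matrix α β ℂ) : Prop :=
  ∃ F : Matrix α β (MvPolynomial ((Fin m × Fin n) ⊕ (Fin n × Fin m)) ℂ),
    ∀ p, M p = F.map (MvPolynomial.eval (coordsOf p))

theorem isPolynomialMatrix_fst : IsPolynomialMatrix fun p : LUSpace m n => p.1 :=
  ⟨of fun i j => .X (.inl (i, j)), fun p => by ext; simp [coordsOf]⟩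

theorem isPolynomialMatrix_snd : IsPolynomialMatrix fun p : LUSpace m n => p.2 :=
  ⟨of fun j i => .X (.inr (j, i)), fun p => by ext; simp [coordsOf]⟩

namespace IsPolynomialMatrix

variable {α β γ δ ε : Type*} {M : LUSpace m n → Matrix α β ℂ}

theorem mul [Fintype β] {N : LUSpace m n → Matrix β γ ℂ} (hM : IsPolynomialMatrix M)
    (hN : IsPolynomialMatrix N) : IsPolynomialMatrix fun p => M p * N p := by
  obtain ⟨F, hF⟩ := hM
  obtain ⟨G, hG⟩ := hN
  exact ⟨F * G, fun p => by simp only [hF, hG, Matrix.map_mul]⟩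

theorem submatrix (hM : IsPolynomialMatrix M) (r : δ → α) (c : ε → β) :
    IsPolynomialMatrix fun p => (M p).submatrix r c := by
  obtain ⟨F, hF⟩ := hM
  exact ⟨F.submatrix r c, fun p => by simp only [hF]; rfl⟩

theorem isZariskiClosed_setOf_apply_eq {N : LUSpace m n → Matrix γ δ ℂ}
    (hM : IsPolynomialMatrix M) (hN : IsPolynomialMatrix N) (i : α) (j : β) (k : γ) (l : δ) :
    IsZariskiClosed {p | M p i j = N p k l} := by
  obtain ⟨F, hF⟩ := hM
  obtain ⟨G, hG⟩ := hN
  convert isZariskiClosed_setOf_eval_eq_zero (F i j - G k l) using 3 with p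
  simp [hF, hG, sub_eq_zero]

theorem isZariskiClosed_setOf_apply_eq_zero (hM : IsPolynomialMatrix M) (i : α) (j : β) :
    IsZariskiClosed {p | M p i j = 0} := by
  obtain ⟨F, hF⟩ := hM
  convert isZariskiClosed_setOf_eval_eq_zero (F i j) using 3 with p
  simp [hF]

theorem isZariskiClosed_setOf_rank_le [Fintype α] [Fintype β] [DecidableEq α] [DecidableEq β]
    (hM : IsPolynomialMatrix M) (r : ℕ) : IsZariskiClosed {p | (M p).rank ≤ r} := by
  obtain ⟨F, hF⟩ := hM
  refine ⟨Set.range fun fg : (Fin (r + 1) → α) × (Fin (r + 1) → β) =>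
    (F.submatrix fg.1 fg.2).det, ?_⟩
  ext p
  simp only [Set.mem_ofPred_eq, Set.forall_mem_range, Prod.forall, RingHom.map_det, hF,
    rank_le_iff_forall_det_submatrix_eq_zero]
  rfl

end IsPolynomialMatrix

end ZariskiClosed

section Eopen

open Matrix

variable {m n : ℕ} {π : Fin m ↪ Fin n} {q : LUSpace m n}

theorem exists_conj_of_mem_Eopen (hq : q ∈ Eopen π) :
    ∃ b ∈ Nminus m, ∃ c ∈ Nplus n, ∃ u : Fin m → ℂ, Function.Injective u ∧ (∀ i, u i ≠ 0) ∧
      q.1 * q.2 = b * diagonal u * b⁻¹ ∧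
      q.2 * q.1 = c * diagonal (Function.extend π u 0) * c⁻¹ := by
  obtain ⟨b, hb, c, hc, s, t, hst, hinj, hX, hY⟩ := hq
  refine ⟨b, hb, c, hc, s * t, fun i i' h => by_contra fun hne => hinj i i' hne h, hst, ?_, ?_⟩
  · rw [hX, hY]
    simp only [Matrix.mul_assoc, nonsing_inv_mul_cancel_left _ _ (isUnit_det_of_mem_Nplus hc)]
    rw [← Matrix.mul_assoc (permMat π), permMat_mul_transpose, Matrix.one_mul,
      ← Matrix.mul_assoc (diagonal s), diagonal_mul_diagonal]
    rfl
  · rw [hX, hY, ← permMat_transpose_mul_diagonal_mul, mul_comm s t]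
    simp only [Matrix.mul_assoc, nonsing_inv_mul_cancel_left _ _ (isUnit_det_of_mem_Nminus hb)]
    rw [← Matrix.mul_assoc (diagonal t), diagonal_mul_diagonal]
    rfl

theorem lowerTri_fst_mul_snd_of_mem_Eopen (hq : q ∈ Eopen π) : LowerTri (q.1 * q.2) := by
  obtain ⟨b, hb, -, -, u, -, -, hXY, -⟩ := exists_conj_of_mem_Eopen hq
  rw [hXY]
  exact (hb.1.isLowerTriangular.mul (blockTriangular_diagonal u)).mul
    (inv_mem_Nminus hb).1.isLowerTriangular

theorem upperTri_snd_mul_fst_of_mem_Eopen (hq : q ∈ Eopen π) : UpperTri (q.2 * q.1) := by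
  obtain ⟨-, -, c, hc, u, -, -, -, hYX⟩ := exists_conj_of_mem_Eopen hq
  rw [hYX]
  exact (hc.1.isUpperTriangular.mul (blockTriangular_diagonal _)).mul
    (inv_mem_Nplus hc).1.isUpperTriangular

theorem exists_diag_of_mem_Eopen (hq : q ∈ Eopen π) :
    ∃ u : Fin m → ℂ, Function.Injective u ∧ (∀ i, u i ≠ 0) ∧
      (q.1 * q.2).diag = u ∧ (q.2 * q.1).diag = Function.extend π u 0 := by
  obtain ⟨b, hb, c, hc, u, hinj, hne, hXY, hYX⟩ := exists_conj_of_mem_Eopen hq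
  refine ⟨u, hinj, hne, funext fun i => ?_, funext fun j => ?_⟩
  · rw [diag_apply, hXY, hb.1.isLowerTriangular.mul_mul_apply_self_of_diag_eq_one
      OrderDual.toDual.injective (blockTriangular_diagonal u)
      (inv_mem_Nminus hb).1.isLowerTriangular hb.2 (inv_mem_Nminus hb).2, diagonal_apply_eq]
  · rw [diag_apply, hYX, hc.1.isUpperTriangular.mul_mul_apply_self_of_diag_eq_one
      Function.injective_id (blockTriangular_diagonal _)
      (inv_mem_Nplus hc).1.isUpperTriangular hc.2 (inv_mem_Nplus hc).2, diagonal_apply_eq]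

theorem diag_snd_mul_fst_of_mem_Eopen (hq : q ∈ Eopen π) :
    (q.2 * q.1).diag = Function.extend π (q.1 * q.2).diag 0 := by
  obtain ⟨u, -, -, hXY, hYX⟩ := exists_diag_of_mem_Eopen hq
  rw [hXY, hYX]

theorem snd_mul_fst_apply_self_of_mem_Eopen (hq : q ∈ Eopen π) (i : Fin m) :
    (q.2 * q.1) (π i) (π i) = (q.1 * q.2) i i := by
  simpa [π.injective.extend_apply] using congrFun (diag_snd_mul_fst_of_mem_Eopen hq) (π i)

theorem snd_mul_fst_apply_self_eq_zero_of_mem_Eopen (hq : q ∈ Eopen π) {j : Fin n}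
    (hj : ∀ i, π i ≠ j) : (q.2 * q.1) j j = 0 := by
  simpa [Function.extend_apply' _ _ _ (not_exists.mpr hj)] using
    congrFun (diag_snd_mul_fst_of_mem_Eopen hq) j

theorem snd_mul_fst_apply_self_ne_of_mem_Eopen (hq : q ∈ Eopen π) {i : Fin m} {j : Fin n}
    (hj : π i ≠ j) : (q.2 * q.1) j j ≠ (q.1 * q.2) i i := by
  obtain ⟨u, hinj, hne, hXY, hYX⟩ := exists_diag_of_mem_Eopen hq
  rw [← diag_apply (q.2 * q.1), ← diag_apply (q.1 * q.2), hXY, hYX]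
  by_cases hk : ∃ k, π k = j
  · obtain ⟨k, rfl⟩ := hk
    rw [π.injective.extend_apply]
    exact hinj.ne fun hki => hj (congrArg π hki.symm)
  · rw [Function.extend_apply' _ _ _ hk]
    exact (hne i).symm

theorem Eopen_nonempty (π : Fin m ↪ Fin n) : (Eopen π).Nonempty := by
  refine ⟨(_, _), 1, ⟨fun i j h => one_apply_ne h.ne, one_apply_eq⟩,
    1, ⟨fun i j h => one_apply_ne h.ne', one_apply_eq⟩, fun i => (i : ℂ) + 1, 1, ?_, ?_, rfl, rfl⟩
  · intro i
    simpa using Nat.cast_add_one_ne_zero (i : ℕ)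
  · intro i i' h
    simpa [Fin.val_inj] using h

theorem rank_submatrix_castLE_fst_le_of_mem_Eopen (hq : q ∈ Eopen π) {a b : ℕ} (ha : a ≤ m)
    (hb : b ≤ n) : (q.1.submatrix (Fin.castLE ha) (Fin.castLE hb)).rank ≤
      (Finset.univ.filter fun x : Fin a => ((π (Fin.castLE ha x) : Fin n) : ℕ) < b).card := by
  obtain ⟨B, hB, C, hC, s, t, -, -, hX, -⟩ := hq
  rw [hX, (inv_mem_Nplus hC).1.mul_submatrix_castLE, hB.1.submatrix_castLE_mul]
  refine ((rank_mul_le_left _ _).trans (rank_mul_le_right _ _)).trans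
    (rank_le_card_of_forall_notMem_row_eq_zero _ _ fun x hx => ?_)
  ext y
  have : π (Fin.castLE ha x) ≠ Fin.castLE hb y := fun h => by simp [h] at hx
  simp [diagonal_mul, permMat_apply, this]

theorem rank_submatrix_natAddSub_snd_le_of_mem_Eopen (hq : q ∈ Eopen π) {a b : ℕ} (ha : a ≤ m)
    (hb : b ≤ n) : (q.2.submatrix (Fin.natAddSub hb) (Fin.natAddSub ha)).rank ≤
      (Finset.univ.filter fun x : Fin a =>
        n - b ≤ ((π (Fin.natAddSub ha x) : Fin n) : ℕ)).card := by
  obtain ⟨B, hB, C, hC, s, t, -, -, -, hY⟩ := hq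
  rw [hY, (inv_mem_Nminus hB).1.mul_submatrix_natAddSub, hC.1.submatrix_natAddSub_mul]
  refine ((rank_mul_le_left _ _).trans (rank_mul_le_right _ _)).trans
    (rank_le_card_of_forall_notMem_col_eq_zero _ _ fun x hx => ?_)
  ext y
  have : π (Fin.natAddSub ha x) ≠ Fin.natAddSub hb y := fun h => by
    have hx' : ¬ n - b ≤ ((π (Fin.natAddSub ha x) : Fin n) : ℕ) := by simpa using hx
    rw [h] at hx'
    exact hx' (Nat.le_add_right _ _)
  simp [mul_diagonal, permMat_apply, this]

end Eopen

/-- Equations satisfied on `E_π`: triangularity (i), the flux equations (ii), rank conditions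
on upper-left submatrices of `X` (iii) and lower-right submatrices of `Y` (iv); and (ii')
the failure of wrong flux equations on other components. -/
theorem equations_on_Epi (m n : ℕ) (π : Fin m ↪ Fin n) :
    (∀ p ∈ Ecomp π,
      -- (i)
      (LowerTri (p.1 * p.2) ∧ UpperTri (p.2 * p.1)) ∧
      -- (ii)
      ((∀ i : Fin m, (p.2 * p.1) (π i) (π i) = (p.1 * p.2) i i) ∧
       (∀ j : Fin n, (∀ i : Fin m, π i ≠ j) → (p.2 * p.1) j j = 0)) ∧
      -- (iii)
      (∀ a b : ℕ, ∀ ha1 : 1 ≤ a, ∀ ha : a ≤ m, ∀ hb1 : 1 ≤ b, ∀ hb : b ≤ n,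
        Matrix.rank (Matrix.of fun (x : Fin a) (y : Fin b) =>
            p.1 ⟨x.1, lt_of_lt_of_le x.isLt ha⟩ ⟨y.1, lt_of_lt_of_le y.isLt hb⟩) ≤
          (Finset.univ.filter
            (fun x : Fin a => ((π ⟨x.1, lt_of_lt_of_le x.isLt ha⟩ : Fin n) : ℕ) < b)).card) ∧
      -- (iv)
      (∀ a b : ℕ, ∀ ha1 : 1 ≤ a, ∀ ha : a ≤ m, ∀ hb1 : 1 ≤ b, ∀ hb : b ≤ n,
        Matrix.rank (Matrix.of fun (y : Fin b) (x : Fin a) =>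
            p.2 ⟨n - b + y.1, by have := y.isLt; omega⟩ ⟨m - a + x.1, by have := x.isLt; omega⟩) ≤
          (Finset.univ.filter
            (fun x : Fin a =>
              n - b ≤ ((π ⟨m - a + x.1, by have := x.isLt; omega⟩ : Fin n) : ℕ))).card)) ∧
    -- (ii')
    (∀ ρ : Fin m ↪ Fin n, ∀ i : Fin m, ρ i ≠ π i →
      ∃ p ∈ Ecomp ρ, (p.2 * p.1) (π i) (π i) ≠ (p.1 * p.2) i i) := by
  have hX := isPolynomialMatrix_fst (m := m) (n := n)
  have hY := isPolynomialMatrix_snd (m := m) (n := n)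
  have hXY := hX.mul hY
  have hYX := hY.mul hX
  refine ⟨fun p hp => ⟨⟨?_, ?_⟩, ⟨?_, ?_⟩, ?_, ?_⟩, fun ρ i hρ => ?_⟩
  · exact fun i j hij => (hXY.isZariskiClosed_setOf_apply_eq_zero i j).zclosure_subset
      (fun q hq => lowerTri_fst_mul_snd_of_mem_Eopen hq i j hij) hp
  · exact fun j j' hj => (hYX.isZariskiClosed_setOf_apply_eq_zero j j').zclosure_subset
      (fun q hq => upperTri_snd_mul_fst_of_mem_Eopen hq j j' hj) hp
  · exact fun i => (hYX.isZariskiClosed_setOf_apply_eq hXY _ _ i i).zclosure_subset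
      (fun q hq => snd_mul_fst_apply_self_of_mem_Eopen hq i) hp
  · exact fun j hj => (hYX.isZariskiClosed_setOf_apply_eq_zero j j).zclosure_subset
      (fun q hq => snd_mul_fst_apply_self_eq_zero_of_mem_Eopen hq hj) hp
  · exact fun a b _ ha _ hb => ((hX.submatrix _ _).isZariskiClosed_setOf_rank_le _).zclosure_subset
      (fun q hq => rank_submatrix_castLE_fst_le_of_mem_Eopen hq ha hb) hp
  · exact fun a b _ ha _ hb => ((hY.submatrix _ _).isZariskiClosed_setOf_rank_le _).zclosure_subset
      (fun q hq => rank_submatrix_natAddSub_snd_le_of_mem_Eopen hq ha hb) hp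
  · obtain ⟨q, hq⟩ := Eopen_nonempty ρ
    exact ⟨q, subset_zclosure _ hq, snd_mul_fst_apply_self_ne_of_mem_Eopen hq hρ⟩
end

section
/- For every hybridization β ∈ {⊤,⊥}^m with opposite hybridization β̄ (β̄_i ≠ β_i for all i), and every π ∈ S_{m,n}: G_π^β(A,B,x_1,…,x_m,y_1,…,y_n) = G_{γ_nπγ_m}^{β̄}(B,A,−x_m,…,−x_1,−y_n,…,−y_1); that is, applying to G_{γ_nπγ_m}^{β̄} the substitution A ↦ B, B ↦ A, x_i ↦ −x_{m+1−i}, y_j ↦ −y_{n+1−j} yields G_π^β, where γ_n π γ_m ∈ S_{m,n} denotes the map i ↦ n+1−π(m+1−i). -/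
/-! # Hybrid generic pipe dreams -/

/-- Tiles: sets of pipe segments in a unit cell. `wn` = {W–N}, `se` = {S–E},
`wnse` = {W–N, S–E}, `en` = {E–N}, `sw` = {S–W}, `ensw` = {E–N, S–W}, `we` = {W–E},
`sn` = {S–N}, `wesn` = {W–E, S–N} (crossing), `blank` = ∅. -/
inductive Tile
  | blank | wn | se | wnse | en | sw | ensw | we | sn | wesn
  deriving DecidableEq

instance : Fintype Tile where
  elems := {.blank, .wn, .se, .wnse, .en, .sw, .ensw, .we, .sn, .wesn}
  complete := fun x => by cases x <;> simp

namespace Tile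

/-- The West edge is occupied. -/
def occW : Tile → Bool
  | wn | wnse | we | wesn | sw | ensw => true
  | _ => false

/-- The East edge is occupied. -/
def occE : Tile → Bool
  | se | wnse | we | wesn | en | ensw => true
  | _ => false

/-- The North edge is occupied. -/
def occN : Tile → Bool
  | wn | wnse | sn | wesn | en | ensw => true
  | _ => false

/-- The South edge is occupied. -/
def occS : Tile → Bool
  | se | wnse | sn | wesn | sw | ensw => true
  | _ => false

/-- Elbow tiles. -/
def isElbow : Tile → Bool
  | wn | se | wnse | en | sw | ensw => true
  | _ => false

/-- Straight tiles. -/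
def isStraight : Tile → Bool
  | we | sn | wesn => true
  | _ => false

/-- Left-right mirror image of a tile (exchanging the roles of the E and W edges). -/
def mirror : Tile → Tile
  | wn => en | en => wn | se => sw | sw => se | wnse => ensw | ensw => wnse
  | t => t

end Tile

/-- The allowed tiles in a row of type `⊤` (`true`) resp. `⊥` (`false`). -/
def allowedIn (rt : Bool) (t : Tile) : Prop :=
  if rt then
    t = .blank ∨ t = .wn ∨ t = .se ∨ t = .wnse ∨ t = .we ∨ t = .sn ∨ t = .wesn
  else
    t = .blank ∨ t = .en ∨ t = .sw ∨ t = .ensw ∨ t = .we ∨ t = .sn ∨ t = .wesn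

section Routing

variable {ι : Type*}

/-- In a `⊤`-row tile, the pipe exiting East given the pipes entering from West and South. -/
def eOutT : Tile → Option ι → Option ι → Option ι
  | .se, _, s => s
  | .wnse, _, s => s
  | .we, w, _ => w
  | .wesn, w, _ => w
  | _, _, _ => none

/-- In a `⊤`-row tile, the pipe exiting North given the pipes entering from West and South. -/
def nOutT : Tile → Option ι → Option ι → Option ι
  | .wn, w, _ => w
  | .wnse, w, _ => w
  | .sn, _, s => s
  | .wesn, _, s => s
  | _, _, _ => none

/-- Tracing a `⊤`-type row left to right: the pipe on the vertical edge left of column `j`,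
where `bot j` is the pipe entering column `j` from the South and `enter` enters from the West. -/
def hTrace (t : ℕ → Tile) (bot : ℕ → Option ι) (enter : Option ι) : ℕ → Option ι
  | 0 => enter
  | j + 1 => eOutT (t j) (hTrace t bot enter j) (bot j)

/-- The pipe exiting North from column `j` of a `⊤`-type row. -/
def topOutT (t : ℕ → Tile) (bot : ℕ → Option ι) (enter : Option ι) (j : ℕ) : Option ι :=
  nOutT (t j) (hTrace t bot enter j) (bot j)

/-- The pipe exiting North from column `j` of a `⊥`-type row with `n` columns (the pipe
`enter` enters from the East); computed by mirroring. -/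
def topOutB (n : ℕ) (t : ℕ → Tile) (bot : ℕ → Option ι) (enter : Option ι) (j : ℕ) :
    Option ι :=
  topOutT (fun j' => (t (n - 1 - j')).mirror) (fun j' => bot (n - 1 - j')) enter (n - 1 - j)

/-- The pipe exiting North from column `j` of a row of type `rt`. -/
def rowTop (rt : Bool) (n : ℕ) (t : ℕ → Tile) (bot : ℕ → Option ι) (enter : Option ι)
    (j : ℕ) : Option ι :=
  if rt then topOutT t bot enter j else topOutB n t bot enter j

end Routing

/-- The row-`i` tiles of a filling, as a `ℕ`-indexed family. -/
def tilesOf {m n : ℕ} (f : Fin m → Fin n → Tile) (i : Fin m) : ℕ → Tile :=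
  fun j => if h : j < n then f i ⟨j, h⟩ else Tile.blank

/-- The pipes (labeled by the row in which they enter) crossing the horizontal line `m - r`
of the grid (so `r = 0` is the South boundary and `r = m` the North boundary). -/
def lineState (m n : ℕ) (β : Fin m → Bool) (f : Fin m → Fin n → Tile) :
    ℕ → ℕ → Option (Fin m)
  | 0, _ => none
  | r + 1, j =>
    if h : r < m then
      rowTop (β ⟨m - 1 - r, by omega⟩) n (tilesOf f ⟨m - 1 - r, by omega⟩)
        (fun j' => lineState m n β f r j') (some ⟨m - 1 - r, by omega⟩) j
    else lineState m n β f r j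

/-- The pipe exiting through the North boundary at column `j`. -/
def northExit (m n : ℕ) (β : Fin m → Bool) (f : Fin m → Fin n → Tile) (j : Fin n) :
    Option (Fin m) :=
  lineState m n β f m (j : ℕ)

private theorem filter_card_lt {m : ℕ} (i : Fin m) (p : Fin m → Prop) [DecidablePred p]
    (h : ∀ a, p a → a ≠ i) : (Finset.univ.filter p).card < m := by
  have hsub : Finset.univ.filter p ⊆ Finset.univ.erase i := fun a ha =>
    Finset.mem_erase.mpr ⟨h a (Finset.mem_filter.mp ha).2, Finset.mem_univ a⟩
  calc (Finset.univ.filter p).card ≤ (Finset.univ.erase i).card := Finset.card_le_card hsub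
    _ < Finset.univ.card := Finset.card_erase_lt_of_mem (Finset.mem_univ i)
    _ = m := by simp

/-- The number `φ_β(i)` (0-indexed) of the pipe entering in row `i`: pipes are numbered
counterclockwise starting from the NW corner. -/
def pipeNo {m : ℕ} (β : Fin m → Bool) (i : Fin m) : Fin m :=
  if hβ : β i then
    ⟨(Finset.univ.filter (fun a => a < i ∧ β a)).card,
      filter_card_lt i _ (fun a ha => ne_of_lt ha.1)⟩
  else
    ⟨(Finset.univ.filter (fun a : Fin m => β a)).card +
        (Finset.univ.filter (fun a : Fin m => i < a ∧ ¬(β a : Prop))).card, by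
      have hd : Disjoint (Finset.univ.filter (fun a : Fin m => (β a : Prop)))
          (Finset.univ.filter (fun a : Fin m => i < a ∧ ¬(β a : Prop))) := by
        rw [Finset.disjoint_left]
        intro a ha hb
        exact (Finset.mem_filter.mp hb).2.2 (Finset.mem_filter.mp ha).2
      rw [← Finset.card_union_of_disjoint hd, ← Finset.filter_or]
      refine filter_card_lt i _ ?_
      rintro a (h1 | ⟨h2, _⟩)
      · rintro rfl; exact hβ h1
      · exact ne_of_gt h2⟩

/-- A hybrid generic pipe dream of type `β`: allowed tiles, matching of occupied edges,
unoccupied South boundary, and entering conditions on the West/East boundaries. -/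
def IsHGPD (m n : ℕ) (β : Fin m → Bool) (f : Fin m → Fin n → Tile) : Prop :=
  (∀ i j, allowedIn (β i) (f i j)) ∧
  (∀ (i : Fin m) (j : Fin n) (h : (j : ℕ) + 1 < n),
    (f i j).occE = (f i ⟨j + 1, h⟩).occW) ∧
  (∀ (i : Fin m) (h : (i : ℕ) + 1 < m) (j : Fin n),
    (f i j).occS = (f ⟨i + 1, h⟩ j).occN) ∧
  (∀ (i : Fin m) (j : Fin n), (i : ℕ) + 1 = m → (f i j).occS = false) ∧
  (∀ (i : Fin m) (j : Fin n), (j : ℕ) = 0 → (f i j).occW = β i) ∧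
  (∀ (i : Fin m) (j : Fin n), (j : ℕ) + 1 = n → (f i j).occE = !β i)

/-- The pipe dream has connectivity `π`: the pipe numbered `k` exits the North side in
column `π(k)`; equivalently the pipe entering in row `i` exits in column `π(φ_β(i))`. -/
def Connectivity (m n : ℕ) (β : Fin m → Bool) (f : Fin m → Fin n → Tile)
    (π : Fin m ↪ Fin n) : Prop :=
  ∀ i : Fin m, northExit m n β f (π (pipeNo β i)) = some i

/-! ## Weights -/

/-- Variable set for `ℤ[x_1,…,x_m,y_1,…,y_n,A,B]`: `none` is `B`, `some (inl i)` is `x_i`,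
`some (inr (inl j))` is `y_j`, `some (inr (inr ()))` is `A`. -/
abbrev PDVar (m n : ℕ) := Option (Fin m ⊕ (Fin n ⊕ Unit))

noncomputable def xP (m n : ℕ) (i : Fin m) : MvPolynomial (PDVar m n) ℤ :=
  MvPolynomial.X (some (Sum.inl i))

noncomputable def yP (m n : ℕ) (j : Fin n) : MvPolynomial (PDVar m n) ℤ :=
  MvPolynomial.X (some (Sum.inr (Sum.inl j)))

noncomputable def AP (m n : ℕ) : MvPolynomial (PDVar m n) ℤ :=
  MvPolynomial.X (some (Sum.inr (Sum.inr ())))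

noncomputable def BP (m n : ℕ) : MvPolynomial (PDVar m n) ℤ :=
  MvPolynomial.X none

/-- The weight of the tile in cell `(i,j)` of a row of type `rt` whose entering pipe is
numbered `k`. -/
noncomputable def tileWt (m n : ℕ) (rt : Bool) (t : Tile) (k : Fin m) (j : Fin n) :
    MvPolynomial (PDVar m n) ℤ :=
  if t.isElbow then AP m n + BP m n
  else if t.isStraight then
    (if rt then AP m n + xP m n k - yP m n j else BP m n - xP m n k + yP m n j)
  else
    (if rt then BP m n - xP m n k + yP m n j else AP m n + xP m n k - yP m n j)

/-- The weight of a pipe dream: the product of the weights of its tiles. -/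
noncomputable def pdWeight (m n : ℕ) (β : Fin m → Bool) (f : Fin m → Fin n → Tile) :
    MvPolynomial (PDVar m n) ℤ :=
  ∏ i : Fin m, ∏ j : Fin n, tileWt m n (β i) (f i j) (pipeNo β i) j

open Classical in
/-- The generic pipe dream polynomial `G_π^β`: the sum of the weights of all hybrid generic
pipe dreams of type `β` with connectivity `π`. -/
noncomputable def GPD (m n : ℕ) (β : Fin m → Bool) (π : Fin m ↪ Fin n) :
    MvPolynomial (PDVar m n) ℤ :=
  ∑ f ∈ Finset.univ.filter
      (fun f : Fin m → Fin n → Tile => IsHGPD m n β f ∧ Connectivity m n β f π),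
    pdWeight m n β f

/-- `γ_n π γ_m ∈ S_{m,n}`: the map `i ↦ n+1−π(m+1−i)`. -/
def revConj {m n : ℕ} (π : Fin m ↪ Fin n) : Fin m ↪ Fin n :=
  ⟨fun i => (π i.rev).rev, fun a b h =>
    Fin.rev_injective (π.injective (Fin.rev_injective h))⟩

/-- The substitution `A ↦ B`, `B ↦ A`, `x_i ↦ −x_{m+1−i}`, `y_j ↦ −y_{n+1−j}`. -/
noncomputable def mirrorSub (m n : ℕ) : PDVar m n → MvPolynomial (PDVar m n) ℤ
  | none => AP m n
  | some (Sum.inl i) => - xP m n i.rev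
  | some (Sum.inr (Sum.inl j)) => - yP m n j.rev
  | some (Sum.inr (Sum.inr _)) => BP m n

/-! Reflecting a pipe dream in a vertical line turns an HGPD of type `β̄` into one of type `β`:
rows change type, column `j` becomes column `n+1−j`, and the counterclockwise numbering of the
pipes is reversed, so the connectivity `γ_nπγ_m` becomes `π`. Under the reflection the
weights of blank and straight tiles in a `⊥` row turn into those of a `⊤` row after the
substitution `A ↔ B`, `x_k ↦ −x_{m+1−k}`, `y_j ↦ −y_{n+1−j}`, so the reflection is a
weight-preserving bijection between the two sums. -/

namespace Tile

@[simp] lemma mirror_mirror (t : Tile) : t.mirror.mirror = t := by cases t <;> rfl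
@[simp] lemma isElbow_mirror (t : Tile) : t.mirror.isElbow = t.isElbow := by cases t <;> rfl
@[simp] lemma isStraight_mirror (t : Tile) : t.mirror.isStraight = t.isStraight := by
  cases t <;> rfl
@[simp] lemma occW_mirror (t : Tile) : t.mirror.occW = t.occE := by cases t <;> rfl
@[simp] lemma occE_mirror (t : Tile) : t.mirror.occE = t.occW := by cases t <;> rfl
@[simp] lemma occN_mirror (t : Tile) : t.mirror.occN = t.occN := by cases t <;> rfl
@[simp] lemma occS_mirror (t : Tile) : t.mirror.occS = t.occS := by cases t <;> rfl

end Tile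

lemma allowedIn_not_mirror (rt : Bool) (t : Tile) :
    allowedIn (!rt) t.mirror ↔ allowedIn rt t := by
  cases rt <;> cases t <;> simp [allowedIn, Tile.mirror]

section Routing

variable {ι : Type*}

lemma hTrace_congr {t t' : ℕ → Tile} {b b' : ℕ → Option ι} (e : Option ι) :
    ∀ j, (∀ k < j, t k = t' k) → (∀ k < j, b k = b' k) →
      hTrace t b e j = hTrace t' b' e j
  | 0, _, _ => rfl
  | j + 1, ht, hb => by
    rw [hTrace, hTrace, ht j j.lt_succ_self, hb j j.lt_succ_self,
      hTrace_congr e j (fun k hk => ht k (hk.trans j.lt_succ_self))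
        (fun k hk => hb k (hk.trans j.lt_succ_self))]

lemma topOutT_congr {t t' : ℕ → Tile} {b b' : ℕ → Option ι} (e : Option ι) (j : ℕ)
    (ht : ∀ k ≤ j, t k = t' k) (hb : ∀ k ≤ j, b k = b' k) :
    topOutT t b e j = topOutT t' b' e j := by
  rw [topOutT, topOutT, ht j le_rfl, hb j le_rfl,
    hTrace_congr e j (fun k hk => ht k hk.le) (fun k hk => hb k hk.le)]

end Routing

def mirrorFilling {m n : ℕ} (f : Fin m → Fin n → Tile) : Fin m → Fin n → Tile :=
  fun i j => (f i j.rev).mirror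

@[simp] lemma mirrorFilling_mirrorFilling {m n : ℕ} (f : Fin m → Fin n → Tile) :
    mirrorFilling (mirrorFilling f) = f := by
  funext i j
  simp [mirrorFilling]

lemma mirrorFilling_involutive {m n : ℕ} :
    Function.Involutive (mirrorFilling : (Fin m → Fin n → Tile) → _) :=
  mirrorFilling_mirrorFilling

lemma tilesOf_mirrorFilling {m n : ℕ} (f : Fin m → Fin n → Tile) (i : Fin m) {k : ℕ}
    (hk : k < n) : tilesOf (mirrorFilling f) i k = (tilesOf f i (n - 1 - k)).mirror := by
  have hrev : (⟨k, hk⟩ : Fin n).rev = ⟨n - 1 - k, by omega⟩ := by ext; simp; omega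
  simp only [tilesOf, dif_pos hk, dif_pos (show n - 1 - k < n by omega), mirrorFilling, hrev]

lemma lineState_mirrorFilling (m n : ℕ) (β : Fin m → Bool) (f : Fin m → Fin n → Tile) :
    ∀ r j, j < n →
      lineState m n β (mirrorFilling f) r j = lineState m n (fun i => !β i) f r (n - 1 - j)
  | 0, _, _ => rfl
  | r + 1, j, hj => by
    have IH := lineState_mirrorFilling m n β f r
    -- `topOutB` is itself computed on the reflected row, so in either case both sides are
    -- the same `topOutT` computation up to the reindexing `k ↦ n - 1 - k`.
    simp only [lineState]
    split
    · next h =>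
      set row : Fin m := ⟨m - 1 - r, by omega⟩
      cases β row
      · simp only [rowTop, Bool.not_false, topOutB, Bool.false_eq_true, if_false, if_true]
        refine topOutT_congr _ _ (fun k hk => ?_) (fun k hk => ?_)
        · rw [tilesOf_mirrorFilling f row (by omega), Tile.mirror_mirror]
          congr 1
          omega
        · rw [IH (n - 1 - k) (by omega)]
          congr 1
          omega
      · simp only [rowTop, Bool.not_true, topOutB, Bool.false_eq_true, if_false, if_true]
        rw [show n - 1 - (n - 1 - j) = j by omega]
        exact topOutT_congr _ _ (fun k hk => tilesOf_mirrorFilling f row (by omega))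
          (fun k hk => IH k (by omega))
    · exact IH j hj

lemma northExit_mirrorFilling (m n : ℕ) (β : Fin m → Bool) (f : Fin m → Fin n → Tile)
    (j : Fin n) :
    northExit m n β (mirrorFilling f) j = northExit m n (fun i => !β i) f j.rev := by
  rw [northExit, northExit, lineState_mirrorFilling m n β f m j j.isLt, Fin.val_rev]
  congr 1
  omega

open Finset in
lemma card_filter_eq_lt_add_gt_add_one {α : Type*} [Fintype α] [LinearOrder α] {p : α → Prop}
    [DecidablePred p] {i : α} (hi : p i) :
    #{a | p a} = #{a | a < i ∧ p a} + #{a | i < a ∧ p a} + 1 := by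
  calc #{a | p a}
      = ∑ a, ((if a < i ∧ p a then 1 else 0) + (if i < a ∧ p a then 1 else 0) +
          if a = i then 1 else 0) := by
        rw [card_filter]
        refine sum_congr rfl fun a _ => ?_
        rcases lt_trichotomy a i with h | rfl | h
        · simp [h, h.ne, not_lt_of_gt h]
        · simp [hi]
        · simp [h, h.ne', not_lt_of_gt h]
    _ = #{a | a < i ∧ p a} + #{a | i < a ∧ p a} + 1 := by
        simp only [sum_add_distrib, card_filter, Fintype.sum_ite_eq']

open Finset in
lemma pipeNo_not {m : ℕ} (β : Fin m → Bool) (i : Fin m) :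
    pipeNo (fun a => !β a) i = (pipeNo β i).rev := by
  have htot : #{a | β a = true} + #{a | β a = false} = m := by
    simpa using card_filter_add_card_filter_not (s := univ) (fun a => β a = true)
  ext
  rw [Fin.val_rev]
  cases hb : β i
  · have := card_filter_eq_lt_add_gt_add_one (p := fun a => β a = false) hb
    simp only [pipeNo, hb, Bool.not_false, ↓reduceDIte, Bool.not_eq_eq_eq_not, Bool.not_true,
      Bool.false_eq_true, Bool.not_eq_true] at this ⊢
    omega
  · have := card_filter_eq_lt_add_gt_add_one (p := fun a => β a = true) hb
    simp only [pipeNo, hb, Bool.not_true, Bool.false_eq_true, ↓reduceDIte,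
      Bool.not_eq_eq_eq_not, Bool.not_eq_false] at this ⊢
    omega

lemma isHGPD_mirrorFilling {m n : ℕ} {β : Fin m → Bool} {f : Fin m → Fin n → Tile}
    (hf : IsHGPD m n β f) : IsHGPD m n (fun i => !β i) (mirrorFilling f) := by
  obtain ⟨hallowed, hhor, hvert, hsouth, hwest, heast⟩ := hf
  refine ⟨fun i j => (allowedIn_not_mirror _ _).mpr (hallowed i j.rev), fun i j h => ?_,
    fun i h j => ?_, fun i j h => ?_, fun i j h => ?_, fun i j h => ?_⟩
  · have := hhor i (⟨j + 1, h⟩ : Fin n).rev (by simp; omega)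
    simp only [mirrorFilling, Tile.occE_mirror, Tile.occW_mirror]
    convert this.symm using 3
    exact Fin.ext (by simp; omega)
  · simpa [mirrorFilling] using hvert i h j.rev
  · simpa [mirrorFilling] using hsouth i j.rev h
  · have := heast i j.rev (by simp; omega)
    simpa [mirrorFilling] using this
  · have := hwest i j.rev (by simp; omega)
    simpa [mirrorFilling] using this

@[simp] lemma revConj_apply {m n : ℕ} (π : Fin m ↪ Fin n) (i : Fin m) :
    revConj π i = (π i.rev).rev := rfl

@[simp] lemma revConj_revConj {m n : ℕ} (π : Fin m ↪ Fin n) : revConj (revConj π) = π := by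
  ext i
  simp

lemma connectivity_mirrorFilling {m n : ℕ} {β : Fin m → Bool} {f : Fin m → Fin n → Tile}
    {π : Fin m ↪ Fin n} (h : Connectivity m n β f π) :
    Connectivity m n (fun i => !β i) (mirrorFilling f) (revConj π) := by
  intro i
  simpa [northExit_mirrorFilling, pipeNo_not] using h i

lemma isHGPD_and_connectivity_mirrorFilling_iff {m n : ℕ} {β : Fin m → Bool}
    {f : Fin m → Fin n → Tile} {π : Fin m ↪ Fin n} :
    IsHGPD m n (fun i => !β i) (mirrorFilling f) ∧
        Connectivity m n (fun i => !β i) (mirrorFilling f) (revConj π) ↔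
      IsHGPD m n β f ∧ Connectivity m n β f π := by
  refine ⟨fun ⟨hH, hC⟩ => ?_, fun ⟨hH, hC⟩ =>
    ⟨isHGPD_mirrorFilling hH, connectivity_mirrorFilling hC⟩⟩
  simpa using And.intro (isHGPD_mirrorFilling hH) (connectivity_mirrorFilling hC)

lemma aeval_mirrorSub_tileWt (m n : ℕ) (rt : Bool) (t : Tile) (k : Fin m) (j : Fin n) :
    MvPolynomial.aeval (mirrorSub m n) (tileWt m n (!rt) t k j) =
      tileWt m n rt t k.rev j.rev := by
  unfold tileWt
  cases t.isElbow <;> cases t.isStraight <;> cases rt <;>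
    simp [AP, BP, xP, yP, mirrorSub] <;> ring

@[simp] lemma tileWt_mirror (m n : ℕ) (rt : Bool) (t : Tile) (k : Fin m) (j : Fin n) :
    tileWt m n rt t.mirror k j = tileWt m n rt t k j := by
  simp [tileWt]

lemma aeval_mirrorSub_pdWeight (m n : ℕ) (β : Fin m → Bool) (f : Fin m → Fin n → Tile) :
    MvPolynomial.aeval (mirrorSub m n) (pdWeight m n (fun i => !β i) f) =
      pdWeight m n β (mirrorFilling f) := by
  simp only [pdWeight, map_prod, pipeNo_not, aeval_mirrorSub_tileWt, mirrorFilling,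
    tileWt_mirror]
  refine Finset.prod_congr rfl fun i _ => ?_
  simp only [Fin.rev_rev]
  exact Fintype.prod_equiv Fin.revPerm _ _ fun j => by simp

theorem GPD_mirror_symmetry_general (m n : ℕ) (β : Fin m → Bool) (π : Fin m ↪ Fin n) :
    GPD m n β π =
      MvPolynomial.aeval (mirrorSub m n)
        (GPD m n (fun i => !β i) (revConj π)) := by
  rw [GPD, GPD, map_sum]
  refine Finset.sum_equiv (Function.Involutive.toPerm _ mirrorFilling_involutive)
    (fun f => ?_) (fun f _ => ?_) <;>
    rw [Function.Involutive.coe_toPerm]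
  · simp only [Finset.mem_filter, Finset.mem_univ, true_and,
      isHGPD_and_connectivity_mirrorFilling_iff]
  · rw [aeval_mirrorSub_pdWeight, mirrorFilling_mirrorFilling]

/-- Corollary of the mirror bijection:
`G_π^β(A,B,x_1,…,x_m,y_1,…,y_n) = G_{γ_nπγ_m}^{β̄}(B,A,−x_m,…,−x_1,−y_n,…,−y_1)`. -/
theorem GPD_mirror_symmetry (m n : ℕ) (hm : 1 ≤ m) (hmn : m ≤ n)
    (β : Fin m → Bool) (π : Fin m ↪ Fin n) :
    GPD m n β π =
      MvPolynomial.aeval (mirrorSub m n)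
        (GPD m n (fun i => !β i) (revConj π)) :=
  GPD_mirror_symmetry_general m n β π
end
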